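/- Let T be a positively edge-weighted tree with m vertices and let Ψ = Ψ_v be its square root embedding into ℝ^{m-1}. For any subset L of the vertices of T with |L| = n ≥ 1, the affine span of Ψ(L) has dimension exactly n - 1. Equivalently, the points of Ψ(L) are affinely independent. -/

import Mathlib

/-!
Since `Ψ_v v = 0`, affine independence of `Ψ_v` on all vertices amounts to linear independence
of the vectors `Ψ_v u`, `u ≠ v`. Order these by depth. The coordinate of `Ψ_v u` at the edge
joining `u` to its parent is `√w > 0`, while that edge lies on the path from `v` to another
vertex `u'` only if `u` does, which forces `u'` to be strictly deeper than `u`. So the family is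
triangular.
-/

open SimpleGraph

/-- The unique path between two vertices of a tree, as a walk. -/
noncomputable def treePath {V : Type*} (G : SimpleGraph V) (hG : G.IsTree) (a b : V) :
    G.Walk a b :=
  (hG.existsUnique_path a b).choose

/-- The square root embedding with base node `v`: the coordinate of `Ψ_v u` at edge `e`
is `√(w e)` if `e` lies on the path from `v` to `u`, and `0` otherwise. -/
noncomputable def sqrtEmbed {V : Type*} [DecidableEq V] (G : SimpleGraph V) (hG : G.IsTree)
    [Fintype G.edgeSet] (w : Sym2 V → ℝ) (v u : V) : EuclideanSpace ℝ G.edgeSet :=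
  WithLp.toLp 2 (fun e : G.edgeSet => if (e : Sym2 V) ∈ (treePath G hG v u).edges then Real.sqrt (w e) else 0)

/-- The tree metric: sum of the weights of the edges on the unique path. -/
noncomputable def treeDist {V : Type*} (G : SimpleGraph V) (hG : G.IsTree)
    (w : Sym2 V → ℝ) (a b : V) : ℝ :=
  ((treePath G hG a b).edges.map w).sum

theorem linearIndependent_of_pivot {ι R M α : Type*} [Ring R] [NoZeroDivisors R]
    [AddCommGroup M] [Module R M] [LinearOrder α] (f : ι → M) (rank : ι → α)
    (φ : ι → M →ₗ[R] R) (hpivot : ∀ i, φ i (f i) ≠ 0)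
    (hzero : ∀ i j, j ≠ i → rank j ≤ rank i → φ i (f j) = 0) :
    LinearIndependent R f := by
  classical
  rw [linearIndependent_iff']
  intro s g hg i hi
  by_contra hgi
  obtain ⟨j, hj, hmax⟩ :=
    (s.filter (g · ≠ 0)).exists_max_image rank ⟨i, Finset.mem_filter.mpr ⟨hi, hgi⟩⟩
  rw [Finset.mem_filter] at hj
  have hφ : φ j (∑ k ∈ s, g k • f k) = g j * φ j (f j) := by
    rw [map_sum, Finset.sum_eq_single_of_mem j hj.1]
    · simp only [map_smul, smul_eq_mul]
    · intro k hk hkj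
      by_cases hgk : g k = 0
      · simp [hgk]
      · simp [hzero j k hkj (hmax k (Finset.mem_filter.mpr ⟨hk, hgk⟩))]
  rw [hg, map_zero] at hφ
  exact mul_ne_zero hj.2 (hpivot j) hφ.symm

namespace SimpleGraph

variable {V : Type*} {G : SimpleGraph V} (hG : G.IsTree)

theorem treePath_isPath (a b : V) : (treePath G hG a b).IsPath :=
  (hG.existsUnique_path a b).choose_spec.1

theorem eq_treePath {a b : V} {p : G.Walk a b} (hp : p.IsPath) : p = treePath G hG a b :=
  (hG.existsUnique_path a b).choose_spec.2 p hp

theorem treePath_self (v : V) : treePath G hG v v = Walk.nil :=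
  Walk.eq_nil_iff_nil.mpr (Walk.isPath_iff_nil.mp (treePath_isPath hG v v))

noncomputable def treeParentEdge (v u : V) : Sym2 V :=
  s((treePath G hG v u).penultimate, u)

theorem treeParentEdge_mem_edges {v u : V} (h : u ≠ v) :
    treeParentEdge hG v u ∈ (treePath G hG v u).edges :=
  Walk.mk_penultimate_end_mem_edges (Walk.not_nil_of_ne h.symm)

theorem treeParentEdge_mem_edgeSet {v u : V} (h : u ≠ v) : treeParentEdge hG v u ∈ G.edgeSet :=
  Walk.edges_subset_edgeSet _ (treeParentEdge_mem_edges hG h)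

variable [DecidableEq V]

theorem eq_of_mem_support_treePath_of_length_le {v u u' : V}
    (hu : u ∈ (treePath G hG v u').support)
    (hlen : (treePath G hG v u').length ≤ (treePath G hG v u).length) : u' = u := by
  set p := treePath G hG v u'
  have htake : p.takeUntil u hu = treePath G hG v u :=
    eq_treePath hG ((treePath_isPath hG v u').takeUntil hu)
  have hsplit : (p.takeUntil u hu).length + (p.dropUntil u hu).length = p.length := by
    rw [← Walk.length_append, p.take_spec hu]
  rw [htake] at hsplit
  exact (Walk.eq_of_length_eq_zero (by omega : (p.dropUntil u hu).length = 0)).symm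

section sqrtEmbed

variable [Fintype G.edgeSet] (w : Sym2 V → ℝ)

theorem sqrtEmbed_apply (v u : V) (e : G.edgeSet) :
    sqrtEmbed G hG w v u e =
      if (e : Sym2 V) ∈ (treePath G hG v u).edges then √(w e) else 0 :=
  rfl

theorem sqrtEmbed_self (v : V) : sqrtEmbed G hG w v v = 0 := by
  ext e
  simp [sqrtEmbed_apply, treePath_self]

variable {w}

theorem linearIndependent_sqrtEmbed (hw : ∀ e ∈ G.edgeSet, 0 < w e) (v : V) :
    LinearIndependent ℝ (fun u : {u // u ≠ v} => sqrtEmbed G hG w v u) := by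
  refine linearIndependent_of_pivot _ (fun u => (treePath G hG v u).length)
    (fun u => (EuclideanSpace.proj
      (⟨treeParentEdge hG v u, treeParentEdge_mem_edgeSet hG u.2⟩ : G.edgeSet)).toLinearMap)
    (fun u => ?_) (fun u u' hne hlen => ?_)
  · simpa [sqrtEmbed_apply, treeParentEdge_mem_edges hG u.2] using
      (Real.sqrt_pos.mpr (hw _ (treeParentEdge_mem_edgeSet hG u.2))).ne'
  · have hmem : treeParentEdge hG v u ∉ (treePath G hG v u').edges := fun h =>
      hne (Subtype.ext (eq_of_mem_support_treePath_of_length_le hG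
        (Walk.snd_mem_support_of_mem_edges _ h) hlen))
    simp [sqrtEmbed_apply, hmem]

theorem affineIndependent_sqrtEmbed (hw : ∀ e ∈ G.edgeSet, 0 < w e) (v : V) :
    AffineIndependent ℝ (sqrtEmbed G hG w v) := by
  rw [affineIndependent_iff_linearIndependent_vsub ℝ _ v]
  simpa [sqrtEmbed_self] using linearIndependent_sqrtEmbed hG hw v

end sqrtEmbed

end SimpleGraph

/-- for any nonempty set `L` of `n` vertices, the embedded points `Ψ(L)` are
affinely independent, and their affine span has dimension exactly `n - 1`. -/
theorem sqrtEmbed_affineIndependent {V : Type*} [DecidableEq V] (G : SimpleGraph V)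
    (hG : G.IsTree) [Fintype G.edgeSet] (w : Sym2 V → ℝ) (hw : ∀ e ∈ G.edgeSet, 0 < w e)
    (v : V) (L : Finset V) (hL : L.Nonempty) :
    AffineIndependent ℝ (fun x : L => sqrtEmbed G hG w v x) ∧
    Module.finrank ℝ
      (vectorSpan ℝ (Set.range (fun x : L => sqrtEmbed G hG w v x))) = L.card - 1 := by
  have hInd : AffineIndependent ℝ (fun x : L => sqrtEmbed G hG w v x) :=
    (affineIndependent_sqrtEmbed hG hw v).comp_embedding (Function.Embedding.subtype _)
  refine ⟨hInd, hInd.finrank_vectorSpan ?_⟩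
  rw [Fintype.card_coe]
  have := hL.card_pos
  omega
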